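/- Let D ⊆ ℝⁿ be a compact set, g : D → ℝ Lipschitz with constant l_g, let μ be a probability measure on D, and let the inputs x₁,…,x_N be sampled i.i.d. from μ, with outputs yᵢ satisfying ‖g(xᵢ) − yᵢ‖ ≤ ε̄. Fix ε ≥ ε̄ and ρ > 0, let l* be the minimal Lipschitz constant over all Lipschitz f : D → ℝ with max_i ‖yᵢ − f(xᵢ)‖ ≤ ε, and suppose h > 0 and δ ∈ [0,1) are such that the covering radius satisfies h(X,D) ≤ h with probability at least 1 − δ. Then with probability at least 1 − δ, every Lipschitz f : D → ℝ with max_i ‖yᵢ − f(xᵢ)‖ ≤ ε and Lip(f) ≤ l* + ρ satisfies sup_{x∈D} ‖g(x) − f(x)‖ ≤ (2·l_g + ρ)·h + 2ε. -/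

import Mathlib

/-!
With probability at least `1 - δ` the samples lie in `D` and every `x ∈ D` has a sample `xᵢ`
within distance `h` (a nearest sample exists since the sample set is finite). Passing from `g`
to `f` through `g(xᵢ)`, `yᵢ` and `f(xᵢ)` costs at most `(l_g + Lip f)·h + ε̄ + ε`. Since `g` itself
fits the data to within `ε̄ ≤ ε`, the minimal constant satisfies `l* ≤ l_g`, so
`Lip f ≤ l_g + ρ` and the bound `(2 l_g + ρ)·h + 2ε` follows.
-/

open scoped NNReal ENNReal
open MeasureTheory

/-- The Lipschitz seminorm of `f` on the set `D`. -/
noncomputable def lipSemi {n : ℕ} (D : Set (EuclideanSpace ℝ (Fin n)))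
    (f : EuclideanSpace ℝ (Fin n) → ℝ) : ℝ :=
  sInf {γ : ℝ | 0 ≤ γ ∧ ∀ x ∈ D, ∀ y ∈ D, ‖f x - f y‖ ≤ γ * ‖x - y‖}

section LipSemi

variable {n : ℕ} {D : Set (EuclideanSpace ℝ (Fin n))} {f : EuclideanSpace ℝ (Fin n) → ℝ}

lemma lipSemi_set_nonempty (hf : ∃ C : ℝ≥0, LipschitzOnWith C f D) :
    {γ : ℝ | 0 ≤ γ ∧ ∀ x ∈ D, ∀ y ∈ D, ‖f x - f y‖ ≤ γ * ‖x - y‖}.Nonempty := by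
  obtain ⟨C, hC⟩ := hf
  refine ⟨C, C.coe_nonneg, fun x hx y hy => ?_⟩
  simpa only [dist_eq_norm] using hC.dist_le_mul x hx y hy

lemma lipSemi_nonneg (hf : ∃ C : ℝ≥0, LipschitzOnWith C f D) : 0 ≤ lipSemi D f :=
  le_csInf (lipSemi_set_nonempty hf) fun _ hγ => hγ.1

lemma lipSemi_le {γ : ℝ} (hγ : 0 ≤ γ) (hf : ∀ x ∈ D, ∀ y ∈ D, ‖f x - f y‖ ≤ γ * ‖x - y‖) :
    lipSemi D f ≤ γ :=
  csInf_le ⟨0, fun _ hγ' => hγ'.1⟩ ⟨hγ, hf⟩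

lemma norm_sub_le_lipSemi_mul (hf : ∃ C : ℝ≥0, LipschitzOnWith C f D)
    {x z : EuclideanSpace ℝ (Fin n)} (hx : x ∈ D) (hz : z ∈ D) :
    ‖f x - f z‖ ≤ lipSemi D f * ‖x - z‖ := by
  rcases eq_or_ne x z with rfl | hxz
  · simp
  have hpos : 0 < ‖x - z‖ := norm_pos_iff.mpr (sub_ne_zero.mpr hxz)
  rw [← div_le_iff₀ hpos]
  exact le_csInf (lipSemi_set_nonempty hf) fun γ hγ => (div_le_iff₀ hpos).mpr (hγ.2 x hx z hz)

lemma exists_lipschitzOnWith_of_norm_sub_le {γ : ℝ} (hγ : 0 ≤ γ)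
    (hf : ∀ x ∈ D, ∀ y ∈ D, ‖f x - f y‖ ≤ γ * ‖x - y‖) :
    ∃ C : ℝ≥0, LipschitzOnWith C f D :=
  ⟨⟨γ, hγ⟩, LipschitzOnWith.of_dist_le_mul fun x hx y hy => by
    rw [dist_eq_norm, dist_eq_norm]
    exact hf x hx y hy⟩

lemma csInf_lipSemi_le {feasible : (EuclideanSpace ℝ (Fin n) → ℝ) → Prop}
    (hf : ∃ C : ℝ≥0, LipschitzOnWith C f D) (hfeas : feasible f) :
    sInf {l : ℝ | ∃ f' : EuclideanSpace ℝ (Fin n) → ℝ,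
      (∃ C : ℝ≥0, LipschitzOnWith C f' D) ∧ feasible f' ∧ l = lipSemi D f'} ≤ lipSemi D f := by
  refine csInf_le ⟨0, ?_⟩ ⟨f, hf, hfeas, rfl⟩
  rintro l ⟨f', hf', -, rfl⟩
  exact lipSemi_nonneg hf'

end LipSemi

lemma exists_dist_le_of_infDist_range_le {X ι : Type*} [PseudoMetricSpace X] [Finite ι]
    [Nonempty ι] (ω : ι → X) {x : X} {h : ℝ} (hx : Metric.infDist x (Set.range ω) ≤ h) :
    ∃ i, dist x (ω i) ≤ h := by
  obtain ⟨_, ⟨i, rfl⟩, hi⟩ :=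
    (Set.finite_range ω).isCompact.exists_infDist_eq_dist (Set.range_nonempty ω) x
  exact ⟨i, hi ▸ hx⟩

lemma norm_sub_le_via_datum {E : Type*} [SeminormedAddCommGroup E] {f g : E → ℝ} {x z : E}
    {y Kg Kf εg εf : ℝ} (hg : ‖g x - g z‖ ≤ Kg * ‖x - z‖) (hgz : ‖g z - y‖ ≤ εg)
    (hfz : ‖y - f z‖ ≤ εf) (hf : ‖f z - f x‖ ≤ Kf * ‖z - x‖) :
    ‖g x - f x‖ ≤ (Kg + Kf) * ‖x - z‖ + εg + εf := by
  rw [norm_sub_rev z x] at hf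
  calc ‖g x - f x‖ ≤ ‖g x - g z‖ + ‖g z - f x‖ := norm_sub_le_norm_sub_add_norm_sub _ _ _
    _ ≤ ‖g x - g z‖ + (‖g z - y‖ + (‖y - f z‖ + ‖f z - f x‖)) := by
      gcongr
      exact (norm_sub_le_norm_sub_add_norm_sub _ y _).trans
        ((add_le_add_iff_left _).2 (norm_sub_le_norm_sub_add_norm_sub _ _ _))
    _ ≤ (Kg + Kf) * ‖x - z‖ + εg + εf := by linarith

lemma norm_sub_le_of_infDist_range_le {n : ℕ} {ι : Type*} [Finite ι] [Nonempty ι]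
    {D : Set (EuclideanSpace ℝ (Fin n))} {g f : EuclideanSpace ℝ (Fin n) → ℝ}
    {lg L εbar ε h : ℝ} (hlg : 0 ≤ lg) (hg : ∀ x ∈ D, ∀ y ∈ D, ‖g x - g y‖ ≤ lg * ‖x - y‖)
    (hf : ∃ C : ℝ≥0, LipschitzOnWith C f D) (hL : lipSemi D f ≤ L)
    {ω : ι → EuclideanSpace ℝ (Fin n)} (hωD : ∀ i, ω i ∈ D)
    (hcov : ∀ x ∈ D, Metric.infDist x (Set.range ω) ≤ h) {y : ι → ℝ}
    (hnoise : ∀ i, ‖g (ω i) - y i‖ ≤ εbar) (hfit : ∀ i, ‖y i - f (ω i)‖ ≤ ε)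
    {x : EuclideanSpace ℝ (Fin n)} (hx : x ∈ D) :
    ‖g x - f x‖ ≤ (lg + L) * h + εbar + ε := by
  obtain ⟨i, hi⟩ := exists_dist_le_of_infDist_range_le ω (hcov x hx)
  rw [dist_eq_norm] at hi
  have hK : 0 ≤ lg + L := add_nonneg hlg ((lipSemi_nonneg hf).trans hL)
  calc ‖g x - f x‖ ≤ (lg + lipSemi D f) * ‖x - ω i‖ + εbar + ε :=
        norm_sub_le_via_datum (hg x hx _ (hωD i)) (hnoise i) (hfit i)
          (norm_sub_le_lipSemi_mul hf (hωD i) hx)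
    _ ≤ (lg + L) * h + εbar + ε := by gcongr

lemma ae_pi_forall_mem {ι α : Type*} [Fintype ι] [MeasurableSpace α] {μ : ι → Measure α}
    [∀ i, SigmaFinite (μ i)] {D : Set α} (hD : ∀ i, μ i Dᶜ = 0) :
    ∀ᵐ ω ∂Measure.pi μ, ∀ i, ω i ∈ D :=
  ae_all_iff.2 fun i => Measure.tendsto_eval_ae_ae (mem_ae_iff.2 (hD i))

theorem stmt10_general {n N : ℕ} (hN : 0 < N)
    (D : Set (EuclideanSpace ℝ (Fin n)))
    (g : EuclideanSpace ℝ (Fin n) → ℝ) (lg : ℝ) (hlg : 0 ≤ lg)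
    (hg : ∀ x ∈ D, ∀ y ∈ D, ‖g x - g y‖ ≤ lg * ‖x - y‖)
    (μ : Measure (EuclideanSpace ℝ (Fin n))) [IsProbabilityMeasure μ]
    (hμD : μ Dᶜ = 0)
    -- noisy outputs, depending on the sampled inputs
    (y : (Fin N → EuclideanSpace ℝ (Fin n)) → Fin N → ℝ)
    (εbar ε ρ h δ : ℝ) (hεε : εbar ≤ ε)
    (hnoise : ∀ ω : Fin N → EuclideanSpace ℝ (Fin n), ∀ i, ‖g (ω i) - y ω i‖ ≤ εbar)
    -- the covering radius is at most h with probability at least 1 - δ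
    (hcov : ENNReal.ofReal (1 - δ) ≤
      (Measure.pi fun _ : Fin N => μ)
        {ω | ∀ x ∈ D, Metric.infDist x (Set.range ω) ≤ h}) :
    ENNReal.ofReal (1 - δ) ≤
      (Measure.pi fun _ : Fin N => μ)
        {ω | ∀ f : EuclideanSpace ℝ (Fin n) → ℝ,
          (∃ C : ℝ≥0, LipschitzOnWith C f D) →
          (∀ i, ‖y ω i - f (ω i)‖ ≤ ε) →
          lipSemi D f ≤ sInf {l : ℝ | ∃ f' : EuclideanSpace ℝ (Fin n) → ℝ,
              (∃ C : ℝ≥0, LipschitzOnWith C f' D) ∧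
              (∀ i, ‖y ω i - f' (ω i)‖ ≤ ε) ∧
              l = lipSemi D f'} + ρ →
          ∀ x ∈ D, ‖g x - f x‖ ≤ (2 * lg + ρ) * h + 2 * ε} := by
  have : Nonempty (Fin N) := Fin.pos_iff_nonempty.mp hN
  refine hcov.trans (measure_mono_ae ?_)
  filter_upwards [ae_pi_forall_mem fun _ => hμD] with ω hωD hωcov
  intro f hf hfit hflip x hx
  have hg_fit : ∀ i, ‖y ω i - g (ω i)‖ ≤ ε := fun i =>
    (norm_sub_rev (y ω i) _).trans_le ((hnoise ω i).trans hεε)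
  have hmin : sInf {l : ℝ | ∃ f' : EuclideanSpace ℝ (Fin n) → ℝ,
      (∃ C : ℝ≥0, LipschitzOnWith C f' D) ∧ (∀ i, ‖y ω i - f' (ω i)‖ ≤ ε) ∧
      l = lipSemi D f'} ≤ lg :=
    (csInf_lipSemi_le (exists_lipschitzOnWith_of_norm_sub_le hlg hg) hg_fit).trans (lipSemi_le hlg hg)
  have hbound := norm_sub_le_of_infDist_range_le (L := lg + ρ) hlg hg hf
    (hflip.trans (by linarith)) hωD hωcov (hnoise ω) hfit hx
  linarith

theorem stmt10 {n N : ℕ} (hN : 0 < N)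
    (D : Set (EuclideanSpace ℝ (Fin n))) (hD : IsCompact D)
    (g : EuclideanSpace ℝ (Fin n) → ℝ) (lg : ℝ) (hlg : 0 ≤ lg)
    (hg : ∀ x ∈ D, ∀ y ∈ D, ‖g x - g y‖ ≤ lg * ‖x - y‖)
    (μ : Measure (EuclideanSpace ℝ (Fin n))) [IsProbabilityMeasure μ]
    (hμD : μ Dᶜ = 0)
    -- noisy outputs, depending on the sampled inputs
    (y : (Fin N → EuclideanSpace ℝ (Fin n)) → Fin N → ℝ)
    (εbar ε ρ h δ : ℝ) (hεbar : 0 ≤ εbar) (hεε : εbar ≤ ε) (hρ : 0 < ρ) (hh : 0 < h)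
    (hδ : 0 ≤ δ) (hδ1 : δ < 1)
    (hnoise : ∀ ω : Fin N → EuclideanSpace ℝ (Fin n), ∀ i, ‖g (ω i) - y ω i‖ ≤ εbar)
    -- the covering radius is at most h with probability at least 1 - δ
    (hcov : ENNReal.ofReal (1 - δ) ≤
      (Measure.pi fun _ : Fin N => μ)
        {ω | ∀ x ∈ D, Metric.infDist x (Set.range ω) ≤ h}) :
    ENNReal.ofReal (1 - δ) ≤
      (Measure.pi fun _ : Fin N => μ)
        {ω | ∀ f : EuclideanSpace ℝ (Fin n) → ℝ,
          (∃ C : ℝ≥0, LipschitzOnWith C f D) →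
          (∀ i, ‖y ω i - f (ω i)‖ ≤ ε) →
          lipSemi D f ≤ sInf {l : ℝ | ∃ f' : EuclideanSpace ℝ (Fin n) → ℝ,
              (∃ C : ℝ≥0, LipschitzOnWith C f' D) ∧
              (∀ i, ‖y ω i - f' (ω i)‖ ≤ ε) ∧
              l = lipSemi D f'} + ρ →
          ∀ x ∈ D, ‖g x - f x‖ ≤ (2 * lg + ρ) * h + 2 * ε} :=
  stmt10_general hN D g lg hlg hg μ hμD y εbar ε ρ h δ hεε hnoise hcov
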